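/- arXiv:2212.11884 — 2 statements merged into one kernel-verified Lean document; each statement's English description precedes it below -/
import Mathlib

section
/- Comparison principle for the heat equation: fix a continuous f : ℝ^d → ℝ with |f(x)| → 0 as |x| → ∞, fix T > 0, and let u, v : ℝ^d × [0,∞) → ℝ be continuous, twice continuously differentiable in space and once continuously differentiable in time on ℝ^d × (0,∞), and satisfy limsup_{|x|→∞} sup_{t∈[0,T]} max(|u(x,t)|, |v(x,t)|) = 0. If u(x,0) = f(x) = v(x,0) for all x ∈ ℝ^d, ∂_t u ≥ (1/2) tr(Σ D²u) on ℝ^d × (0,∞), and ∂_t v ≤ (1/2) tr(Σ D²v) on ℝ^d × (0,∞), then u ≥ v on ℝ^d × [0,T]. -/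
/-!
Weak maximum principle. For `ε > 0`, if `w = v - u - ε t` were positive somewhere on
`ℝ^d × [0, T]`, it would attain its maximum there, since it is small at spatial infinity, at a
point `(x₀, t₀)` with `t₀ > 0`, since `w ≤ 0` at `t = 0`. At that point `D²(v - u) ≤ 0`, hence
`tr (Σ D²(v - u)) ≤ 0` because `Σ ⪰ 0`, while `∂ₜ w ≥ 0` because the maximum is approached from
earlier times. This contradicts `∂ₜ (v - u) ≤ ½ tr (Σ D²(v - u))`. Letting `ε → 0` gives `v ≤ u`.
-/

open MeasureTheory ProbabilityTheory Filter Topology Set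

noncomputable section

abbrev Euc (d : ℕ) : Type := EuclideanSpace ℝ (Fin d)

/-- The quadratic form `aᵀ S a`. -/
def quadForm {d : ℕ} (S : Matrix (Fin d) (Fin d) ℝ) (a : Euc d) : ℝ :=
  ∑ i, ∑ j, a i * S i j * a j

/-- `ν` is the centered Gaussian measure on `ℝ^d` with covariance matrix `S`:
every linear functional pushes forward to a one-dimensional centered Gaussian with
the appropriate variance. -/
def IsCenteredGaussianMeasure {d : ℕ} (S : Matrix (Fin d) (Fin d) ℝ)
    (ν : Measure (Euc d)) : Prop :=
  IsProbabilityMeasure ν ∧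
  ∀ a : Euc d, ν.map (fun x => ∑ i, a i * x i) = gaussianReal 0 (quadForm S a).toNNReal

/-- The covariance matrix of a random vector `Y`. -/
def covMatrix {d : ℕ} {Ω : Type} [MeasurableSpace Ω] (μ : Measure Ω) (Y : Ω → Euc d) :
    Matrix (Fin d) (Fin d) ℝ :=
  Matrix.of fun i j => ∫ ω, Y ω i * Y ω j ∂μ

/-- The i.i.d., centered, square-integrable hypothesis, with covariance matrix `S`. -/
structure IsIIDCentered {d : ℕ} {Ω : Type} [MeasurableSpace Ω] (μ : Measure Ω)
    (X : ℕ → Ω → Euc d) (S : Matrix (Fin d) (Fin d) ℝ) : Prop where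
  meas : ∀ i, Measurable (X i)
  indep : iIndepFun X μ
  ident : ∀ i, μ.map (X i) = μ.map (X 0)
  sqInt : MemLp (X 0) 2 μ
  centered : ∫ ω, X 0 ω ∂μ = 0
  covEq : covMatrix μ (X 0) = S

/-- Partial sums `S_n = X_1 + ⋯ + X_n`. -/
def pSum {d : ℕ} {Ω : Type} (X : ℕ → Ω → Euc d) (n : ℕ) (ω : Ω) : Euc d :=
  ∑ i ∈ Finset.range n, X i ω

/-- `f ∈ C^k(ℝ^d)`: all derivatives up to order `k` exist and are uniformly bounded. -/
def MemCk {d : ℕ} (k : ℕ) (f : Euc d → ℝ) : Prop :=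
  ContDiff ℝ k f ∧ ∀ i ≤ k, ∃ M, ∀ x, ‖iteratedFDeriv ℝ i f x‖ ≤ M

/-- The `C^k` norm of `f`: the sum of the sup norms of the derivatives of order up to `k`. -/
def ckNorm {d : ℕ} (k : ℕ) (f : Euc d → ℝ) : ℝ :=
  ∑ i ∈ Finset.range (k + 1), ⨆ x, ‖iteratedFDeriv ℝ i f x‖

/-- The Hessian matrix (in space) of `f` at `x`. -/
def hessian {d : ℕ} (f : Euc d → ℝ) (x : Euc d) : Matrix (Fin d) (Fin d) ℝ :=
  Matrix.of fun i j =>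
    iteratedFDeriv ℝ 2 f x ![EuclideanSpace.single i 1, EuclideanSpace.single j 1]

/-- The discrete scheme `u_n(x,t) = E[f(x + S_{⌊nt⌋}/√n)]`. -/
def schemeU {d : ℕ} {Ω : Type} [MeasurableSpace Ω] (μ : Measure Ω) (X : ℕ → Ω → Euc d)
    (f : Euc d → ℝ) (n : ℕ) (x : Euc d) (t : ℝ) : ℝ :=
  ∫ ω, f (x + (Real.sqrt n)⁻¹ • pSum X ⌊(n : ℝ) * t⌋₊ ω) ∂μ

/-- The heat semigroup `u(x,t) = E[f(x + √t ξ)]`, where `ξ ∼ ν`. -/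
def heatU {d : ℕ} (ν : Measure (Euc d)) (f : Euc d → ℝ) (x : Euc d) (t : ℝ) : ℝ :=
  ∫ y, f (x + Real.sqrt t • y) ∂ν

/-- `u` is twice continuously differentiable in space and once continuously differentiable in
time on `ℝ^d × (0,∞)`. -/
def IsC21 {d : ℕ} (u : Euc d → ℝ → ℝ) : Prop :=
  (∀ t > (0:ℝ), ContDiff ℝ 2 (fun x => u x t)) ∧
  (∀ x : Euc d, ContDiffOn ℝ 1 (u x) (Set.Ioi 0))

open Matrix

open scoped MatrixOrder in
theorem Matrix.PosSemidef.trace_mul_nonpos {n : Type*} [Fintype n] [DecidableEq n]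
    {S H : Matrix n n ℝ} (hS : S.PosSemidef) (hH : ∀ x : n → ℝ, x ⬝ᵥ H *ᵥ x ≤ 0) :
    (S * H).trace ≤ 0 := by
  -- `S = Bᵀ B`, so `tr (S H) = ∑ⱼ (B j)ᵀ H (B j)`.
  obtain ⟨B, rfl⟩ := CStarAlgebra.nonneg_iff_eq_star_mul_self.mp hS.nonneg
  rw [Matrix.mul_assoc, Matrix.trace_mul_comm, Matrix.trace]
  refine Finset.sum_nonpos fun j _ => ?_
  simpa [Matrix.mul_mul_apply, Matrix.star_eq_conjTranspose] using hH (B j)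

theorem IsLocalMax.deriv_deriv_nonpos {f : ℝ → ℝ} {a : ℝ} (h : IsLocalMax f a)
    (hc : ContinuousAt f a) : deriv (deriv f) a ≤ 0 := by
  -- If `f'' a > 0`, the second derivative test makes `a` a local minimum as well, so `f` is
  -- locally constant and `f'' a = 0`.
  by_contra! hpos
  have hmin := isLocalMin_of_deriv_deriv_pos hpos h.deriv_eq_zero hc
  have hconst : f =ᶠ[𝓝 a] fun _ => f a :=
    (hmin.and h).mono fun y hy => le_antisymm hy.2 hy.1
  simp [hconst.deriv.deriv_eq] at hpos

theorem IsLocalMax.fderiv_fderiv_apply_self_nonpos {E : Type*} [NormedAddCommGroup E]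
    [NormedSpace ℝ E] {f : E → ℝ} {a : E} (h : IsLocalMax f a) (hf : ContDiffAt ℝ 2 f a)
    (y : E) : fderiv ℝ (fderiv ℝ f) a y y ≤ 0 := by
  set γ : ℝ → E := fun s => a + s • y
  have hγ : ∀ s, HasDerivAt γ y s := fun s =>
    (((hasDerivAt_id s).smul_const y).const_add a).congr_deriv (one_smul ℝ y)
  have hγ0 : γ 0 = a := by simp [γ]
  have hmax : IsLocalMax (f ∘ γ) 0 := (hγ0 ▸ h).comp_continuous (hγ 0).continuousAt
  have hderiv : deriv (f ∘ γ) =ᶠ[𝓝 0] fun s => fderiv ℝ f (γ s) y := by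
    have hdiff : ∀ᶠ x in 𝓝 (γ 0), DifferentiableAt ℝ f x :=
      (hγ0 ▸ hf.eventually (by simp)).mono fun x hx => hx.differentiableAt (by norm_num)
    filter_upwards [(hγ 0).continuousAt.eventually hdiff] with s hs
    exact (hs.hasFDerivAt.comp_hasDerivAt s (hγ s)).deriv
  have hderiv2 : HasDerivAt (fun s => fderiv ℝ f (γ s) y) (fderiv ℝ (fderiv ℝ f) a y y) 0 := by
    have hF : DifferentiableAt ℝ (fderiv ℝ f) (γ 0) :=
      hγ0 ▸ (hf.fderiv_right (m := 1) (by norm_num)).differentiableAt (by norm_num)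
    simpa [hγ0] using (hF.hasFDerivAt.comp_hasDerivAt 0 (hγ 0)).clm_apply (hasDerivAt_const 0 y)
  have := hmax.deriv_deriv_nonpos ((hγ0 ▸ hf.continuousAt).comp (hγ 0).continuousAt)
  rwa [hderiv.deriv_eq, hderiv2.deriv] at this

theorem IsLocalMaxOn.deriv_nonneg_of_Iic {f : ℝ → ℝ} {a : ℝ} (h : IsLocalMaxOn f (Iic a) a) :
    0 ≤ deriv f a := by
  by_cases hf : DifferentiableAt ℝ f a
  · have hneg : (-1 : ℝ) ∈ posTangentConeAt (Iic a) a := by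
      refine mem_posTangentConeAt_of_segment_subset ?_
      rw [segment_symm, segment_eq_Icc (by linarith)]
      exact Icc_subset_Iic_self
    simpa using h.hasFDerivWithinAt_nonpos hf.hasDerivAt.hasFDerivAt.hasFDerivWithinAt hneg
  · simp [deriv_zero_of_not_differentiableAt hf]

theorem hessian_dotProduct_mulVec {d : ℕ} (f : Euc d → ℝ) (x : Euc d) (a : Fin d → ℝ) :
    a ⬝ᵥ hessian f x *ᵥ a =
      fderiv ℝ (fderiv ℝ f) x (WithLp.toLp 2 a) (WithLp.toLp 2 a) := by
  have ha : WithLp.toLp 2 a = ∑ i, a i • EuclideanSpace.single i (1 : ℝ) := by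
    simpa using ((EuclideanSpace.basisFun (Fin d) ℝ).sum_repr (WithLp.toLp 2 a)).symm
  rw [ha]
  simp only [dotProduct, mulVec, hessian, iteratedFDeriv_two_apply, cons_val_zero, cons_val_one,
    of_apply, Finset.mul_sum, map_sum, map_smul, _root_.sum_apply, _root_.smul_apply, smul_eq_mul]
  rw [Finset.sum_comm]
  exact Finset.sum_congr rfl fun _ _ => Finset.sum_congr rfl fun _ _ => by ring

theorem hessian_sub {d : ℕ} {f g : Euc d → ℝ} {x : Euc d} (hf : ContDiffAt ℝ 2 f x)
    (hg : ContDiffAt ℝ 2 g x) : hessian (f - g) x = hessian f x - hessian g x := by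
  ext i j
  simp [hessian, iteratedFDeriv_sub_apply hf hg]

theorem IsLocalMax.trace_mul_hessian_nonpos {d : ℕ} {S : Matrix (Fin d) (Fin d) ℝ}
    (hS : S.PosSemidef) {g : Euc d → ℝ} {x : Euc d} (h : IsLocalMax g x)
    (hg : ContDiffAt ℝ 2 g x) : (S * hessian g x).trace ≤ 0 :=
  hS.trace_mul_nonpos fun a =>
    (hessian_dotProduct_mulVec g x a).trans_le (h.fderiv_fderiv_apply_self_nonpos hg _)

theorem exists_isMaxOn_univ_prod {E F : Type*} [NormedAddCommGroup E] [ProperSpace E]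
    [TopologicalSpace F] [T2Space F] {K : Set F} (hK : IsCompact K) {W : E × F → ℝ}
    (hW : ContinuousOn W (univ ×ˢ K)) {c R : ℝ}
    (hfar : ∀ x : E, R ≤ ‖x‖ → ∀ t ∈ K, W (x, t) < c) {p : E × F} (hp : p ∈ univ ×ˢ K)
    (hc : c ≤ W p) : ∃ q ∈ univ ×ˢ K, IsMaxOn W (univ ×ˢ K) q := by
  refine hW.exists_isMaxOn' (isClosed_univ.prod hK.isClosed) hp ?_
  have hball : IsCompact (Metric.closedBall (0 : E) R ×ˢ K) :=
    (isCompact_closedBall _ _).prod hK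
  filter_upwards [inter_mem_inf hball.compl_mem_cocompact (mem_principal_self _)]
    with q ⟨hqK, hq⟩
  have hRq : R < ‖q.1‖ := by simpa [hq.2] using hqK
  exact (hfar q.1 hRq.le q.2 hq.2).le.trans hc

theorem false_of_isLocalMax_sub_of_heat_super_sub {d : ℕ} {S : Matrix (Fin d) (Fin d) ℝ}
    (hS : S.PosSemidef) {u v : Euc d → ℝ → ℝ} {x₀ : Euc d} {t₀ ε : ℝ} (hε : 0 < ε)
    (hu : ContDiffAt ℝ 2 (fun x => u x t₀) x₀) (hv : ContDiffAt ℝ 2 (fun x => v x t₀) x₀)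
    (hut : DifferentiableAt ℝ (u x₀) t₀) (hvt : DifferentiableAt ℝ (v x₀) t₀)
    (hu_super : (S * hessian (fun y => u y t₀) x₀).trace / 2 ≤ deriv (u x₀) t₀)
    (hv_sub : deriv (v x₀) t₀ ≤ (S * hessian (fun y => v y t₀) x₀).trace / 2)
    (hx : IsLocalMax (fun x => v x t₀ - u x t₀) x₀)
    (ht : IsLocalMaxOn (fun t => v x₀ t - u x₀ t - ε * t) (Iic t₀) t₀) : False := by
  have htrace : (S * hessian (fun y => v y t₀) x₀).trace -
      (S * hessian (fun y => u y t₀) x₀).trace ≤ 0 := by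
    rw [← Matrix.trace_sub, ← Matrix.mul_sub, ← hessian_sub hv hu]
    exact hx.trace_mul_hessian_nonpos hS (hv.sub hu)
  have hderiv : HasDerivAt (fun t => v x₀ t - u x₀ t - ε * t)
      (deriv (v x₀) t₀ - deriv (u x₀) t₀ - ε) t₀ :=
    (hvt.hasDerivAt.sub hut.hasDerivAt).sub
      (((hasDerivAt_id t₀).const_mul ε).congr_deriv (mul_one ε))
  have := hderiv.deriv ▸ ht.deriv_nonneg_of_Iic
  linarith

theorem sub_le_mul_of_heat_super_sub {d : ℕ} {S : Matrix (Fin d) (Fin d) ℝ} (hS : S.PosSemidef)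
    {T : ℝ} {u v : Euc d → ℝ → ℝ}
    (hu_cont : ContinuousOn (fun p : Euc d × ℝ => u p.1 p.2) (univ ×ˢ Ici 0))
    (hv_cont : ContinuousOn (fun p : Euc d × ℝ => v p.1 p.2) (univ ×ˢ Ici 0))
    (hu_reg : IsC21 u) (hv_reg : IsC21 v)
    (hvanish : ∀ ε > (0:ℝ), ∃ R : ℝ, ∀ x : Euc d, R ≤ ‖x‖ →
      ∀ t ∈ Icc 0 T, max |u x t| |v x t| < ε)
    (h0 : ∀ x, v x 0 ≤ u x 0)
    (hu_super : ∀ x : Euc d, ∀ t > (0:ℝ),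
      (S * hessian (fun y => u y t) x).trace / 2 ≤ deriv (u x) t)
    (hv_sub : ∀ x : Euc d, ∀ t > (0:ℝ),
      deriv (v x) t ≤ (S * hessian (fun y => v y t) x).trace / 2)
    {ε : ℝ} (hε : 0 < ε) : ∀ x : Euc d, ∀ t ∈ Icc 0 T, v x t - u x t ≤ ε * t := by
  by_contra! ⟨x₁, t₁, ht₁, hpos⟩
  set W : Euc d × ℝ → ℝ := fun p => v p.1 p.2 - u p.1 p.2 - ε * p.2
  obtain ⟨R, hR⟩ := hvanish (W (x₁, t₁) / 2) (by simp only [W]; linarith)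
  have hfar : ∀ x : Euc d, R ≤ ‖x‖ → ∀ t ∈ Icc 0 T, W (x, t) < W (x₁, t₁) := by
    intro x hx t ht
    have hsmall := max_lt_iff.mp (hR x hx t ht)
    have : 0 ≤ ε * t := mul_nonneg hε.le ht.1
    simp only [W] at hsmall ⊢
    linarith [le_abs_self (v x t), neg_abs_le (u x t)]
  have hW : ContinuousOn W (univ ×ˢ Icc 0 T) :=
    ((hv_cont.sub hu_cont).sub (continuous_const.mul continuous_snd).continuousOn).mono
      (prod_mono subset_rfl Icc_subset_Ici_self)
  obtain ⟨⟨x₀, t₀⟩, ⟨-, ht₀ : t₀ ∈ Icc 0 T⟩, hmax⟩ :=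
    exists_isMaxOn_univ_prod isCompact_Icc hW hfar ⟨trivial, ht₁⟩ le_rfl
  have ht₀pos : 0 < t₀ := by
    refine ht₀.1.lt_of_ne' fun h => ?_
    have hle : W (x₁, t₁) ≤ W (x₀, t₀) := hmax ⟨trivial, ht₁⟩
    simp only [W, h, mul_zero, sub_zero] at hle
    linarith [h0 x₀]
  have hu2 : ContDiffAt ℝ 2 (fun x => u x t₀) x₀ := (hu_reg.1 t₀ ht₀pos).contDiffAt
  have hv2 : ContDiffAt ℝ 2 (fun x => v x t₀) x₀ := (hv_reg.1 t₀ ht₀pos).contDiffAt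
  have hut : DifferentiableAt ℝ (u x₀) t₀ :=
    ((hu_reg.2 x₀).contDiffAt (Ioi_mem_nhds ht₀pos)).differentiableAt one_ne_zero
  have hvt : DifferentiableAt ℝ (v x₀) t₀ :=
    ((hv_reg.2 x₀).contDiffAt (Ioi_mem_nhds ht₀pos)).differentiableAt one_ne_zero
  refine false_of_isLocalMax_sub_of_heat_super_sub hS hε hu2 hv2 hut hvt
    (hu_super x₀ t₀ ht₀pos) (hv_sub x₀ t₀ ht₀pos) (Eventually.of_forall fun x => ?_) ?_
  · have : W (x, t₀) ≤ W (x₀, t₀) := hmax ⟨trivial, ht₀⟩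
    simp only [W] at this
    linarith
  · filter_upwards [self_mem_nhdsWithin, nhdsWithin_le_nhds (Ioi_mem_nhds ht₀pos)]
      with s hs hs'
    exact hmax (show (x₀, s) ∈ univ ×ˢ Icc 0 T from ⟨trivial, le_of_lt hs', hs.trans ht₀.2⟩)

theorem heat_comparison_general
    {d : ℕ} (S : Matrix (Fin d) (Fin d) ℝ) (hS : S.PosSemidef)
    (f : Euc d → ℝ)
    (T : ℝ) (u v : Euc d → ℝ → ℝ)
    (hu_cont : ContinuousOn (fun p : Euc d × ℝ => u p.1 p.2) (Set.univ ×ˢ Set.Ici 0))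
    (hv_cont : ContinuousOn (fun p : Euc d × ℝ => v p.1 p.2) (Set.univ ×ˢ Set.Ici 0))
    (hu_reg : IsC21 u) (hv_reg : IsC21 v)
    (hvanish : ∀ ε > (0:ℝ), ∃ R : ℝ, ∀ x : Euc d, R ≤ ‖x‖ →
      ∀ t ∈ Set.Icc 0 T, max |u x t| |v x t| < ε)
    (hu0 : ∀ x, u x 0 = f x) (hv0 : ∀ x, v x 0 = f x)
    (hu_super : ∀ x : Euc d, ∀ t > (0:ℝ),
      Matrix.trace (S * hessian (fun y => u y t) x) / 2 ≤ deriv (u x) t)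
    (hv_sub : ∀ x : Euc d, ∀ t > (0:ℝ),
      deriv (v x) t ≤ Matrix.trace (S * hessian (fun y => v y t) x) / 2) :
    ∀ x : Euc d, ∀ t ∈ Set.Icc 0 T, v x t ≤ u x t := by
  intro x t ht
  have hbound : ∀ ε > (0:ℝ), v x t - u x t ≤ ε * t := fun ε hε =>
    sub_le_mul_of_heat_super_sub hS hu_cont hv_cont hu_reg hv_reg hvanish
      (fun y => (hv0 y).trans (hu0 y).symm |>.le) hu_super hv_sub hε x t ht
  have hlim : Tendsto (fun ε : ℝ => ε * t) (𝓝[>] 0) (𝓝 0) :=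
    tendsto_nhdsWithin_of_tendsto_nhds (by simpa using (continuous_mul_const t).tendsto 0)
  exact sub_nonpos.mp (ge_of_tendsto hlim (eventually_nhdsWithin_of_forall hbound))

/-- **Comparison principle for the heat equation**: if `u` is a supersolution and `v` a
subsolution of `∂ₜ w = ½ tr(Σ D²w)` on `ℝ^d × (0,∞)`, both continuous on `ℝ^d × [0,∞)`,
vanishing at spatial infinity uniformly on `[0,T]` and agreeing with `f` at `t = 0`,
then `u ≥ v` on `ℝ^d × [0,T]`. -/
theorem heat_comparison
    {d : ℕ} (S : Matrix (Fin d) (Fin d) ℝ) (hS : S.PosSemidef)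
    (f : Euc d → ℝ) (hfc : Continuous f) (hf0 : Tendsto f (cocompact (Euc d)) (𝓝 0))
    (T : ℝ) (hT : 0 < T) (u v : Euc d → ℝ → ℝ)
    (hu_cont : ContinuousOn (fun p : Euc d × ℝ => u p.1 p.2) (Set.univ ×ˢ Set.Ici 0))
    (hv_cont : ContinuousOn (fun p : Euc d × ℝ => v p.1 p.2) (Set.univ ×ˢ Set.Ici 0))
    (hu_reg : IsC21 u) (hv_reg : IsC21 v)
    (hvanish : ∀ ε > (0:ℝ), ∃ R : ℝ, ∀ x : Euc d, R ≤ ‖x‖ →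
      ∀ t ∈ Set.Icc 0 T, max |u x t| |v x t| < ε)
    (hu0 : ∀ x, u x 0 = f x) (hv0 : ∀ x, v x 0 = f x)
    (hu_super : ∀ x : Euc d, ∀ t > (0:ℝ),
      Matrix.trace (S * hessian (fun y => u y t) x) / 2 ≤ deriv (u x) t)
    (hv_sub : ∀ x : Euc d, ∀ t > (0:ℝ),
      deriv (v x) t ≤ Matrix.trace (S * hessian (fun y => v y t) x) / 2) :
    ∀ x : Euc d, ∀ t ∈ Set.Icc 0 T, v x t ≤ u x t :=
  heat_comparison_general S hS f T u v hu_cont hv_cont hu_reg hv_reg hvanish hu0 hv0 hu_super hv_sub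
end
end

section
/- Time-increment bound for the scheme: for every f ∈ C^2(ℝ^d), every integer n ≥ 1, every x ∈ ℝ^d and every t ≥ 0, |u_n(x, t + 1/n) − u_n(x,t)| ≤ ‖f‖_{C^2} · tr(Σ) / (2n). -/
open MeasureTheory ProbabilityTheory Filter Topology Set

noncomputable section

/-!
Between times `t` and `t + 1/n` the scheme takes exactly one more step: with `m = ⌊nt⌋`,
`u_n(x, t + 1/n) - u_n(x, t) = E[f(Y + V) - f(Y)]` for `Y = x + S_m/√n` and `V = X_{m+1}/√n`,
which is independent of `Y`. Expanding `f` to second order around `Y`, the first-order term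
`E[Df(Y) V]` factors by independence as `E[Df(Y)] E[V] = 0`, and the Taylor remainder is at
most `‖D²f‖_∞ E‖V‖² / 2 = ‖D²f‖_∞ tr Σ / (2n)`.
-/

section

variable {E F : Type*} [NormedAddCommGroup E] [NormedSpace ℝ E]
  [NormedAddCommGroup F] [NormedSpace ℝ F]

lemma norm_fderiv_sub_fderiv_le {f : E → F} (hf : ContDiff ℝ 2 f) {M : ℝ}
    (hM : ∀ y, ‖iteratedFDeriv ℝ 2 f y‖ ≤ M) (x y : E) :
    ‖fderiv ℝ f y - fderiv ℝ f x‖ ≤ M * ‖y - x‖ := by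
  refine Convex.norm_image_sub_le_of_norm_fderiv_le (𝕜 := ℝ) (s := Set.univ)
    (fun z _ => ((hf.fderiv_right (m := 1) le_rfl).differentiable one_ne_zero z)) (fun z _ => ?_)
    convex_univ trivial trivial
  rw [← norm_iteratedFDeriv_one, norm_iteratedFDeriv_fderiv]
  exact hM z

lemma norm_sub_sub_fderiv_apply_le {f : E → F} (hf : ContDiff ℝ 2 f) {M : ℝ}
    (hM : ∀ y, ‖iteratedFDeriv ℝ 2 f y‖ ≤ M) (x h : E) :
    ‖f (x + h) - f x - fderiv ℝ f x h‖ ≤ M / 2 * ‖h‖ ^ 2 := by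
  have hdiff : Differentiable ℝ f := hf.differentiable two_ne_zero
  let g : ℝ → F := fun s => f (x + s • h) - f x - s • fderiv ℝ f x h
  have hg : ∀ s, HasDerivAt g (fderiv ℝ f (x + s • h) h - fderiv ℝ f x h) s := fun s => by
    have hpath : HasDerivAt (fun s : ℝ => x + s • h) h s := by
      simpa using ((hasDerivAt_id s).smul_const h).const_add x
    exact (((hdiff _).hasFDerivAt.comp_hasDerivAt s hpath).sub_const _).sub
      (by simpa using (hasDerivAt_id s).smul_const (fderiv ℝ f x h))
  have hB : ∀ s : ℝ, HasDerivAt (fun s => M / 2 * ‖h‖ ^ 2 * s ^ 2) (M * ‖h‖ ^ 2 * s) s :=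
    fun s => ((hasDerivAt_pow 2 s).const_mul (M / 2 * ‖h‖ ^ 2)).congr_deriv (by ring)
  have h_at_one := image_norm_le_of_norm_deriv_right_le_deriv_boundary (a := 0) (b := 1) (f := g)
    (fun s _ => (hg s).continuousAt.continuousWithinAt) (fun s _ => (hg s).hasDerivWithinAt)
    (by simp [g]) hB (fun s hs => ?_) (Set.right_mem_Icc.2 zero_le_one)
  · simpa [g] using h_at_one
  · calc ‖fderiv ℝ f (x + s • h) h - fderiv ℝ f x h‖
        = ‖(fderiv ℝ f (x + s • h) - fderiv ℝ f x) h‖ := rfl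
      _ ≤ M * ‖x + s • h - x‖ * ‖h‖ :=
        ((fderiv ℝ f (x + s • h) - fderiv ℝ f x).le_opNorm h).trans
          (mul_le_mul_of_nonneg_right (norm_fderiv_sub_fderiv_le hf hM _ _) (norm_nonneg h))
      _ = M * ‖h‖ ^ 2 * s := by
        rw [add_sub_cancel_left, norm_smul, Real.norm_of_nonneg hs.1]; ring

theorem norm_integral_comp_add_sub_integral_comp_le [CompleteSpace E] [CompleteSpace F]
    [MeasurableSpace E] [BorelSpace E] [SecondCountableTopology E] {Ω : Type*}
    [MeasurableSpace Ω] {μ : Measure Ω} [IsProbabilityMeasure μ] {Y V : Ω → E}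
    (hYV : Y ⟂ᵢ[μ] V) (hY : AEStronglyMeasurable Y μ)
    (hV : MemLp V 2 μ) (hV₀ : μ[V] = 0) {f : E → F} (hf : ContDiff ℝ 2 f) {C₀ C₁ M : ℝ}
    (hf₀ : ∀ y, ‖f y‖ ≤ C₀) (hf₁ : ∀ y, ‖fderiv ℝ f y‖ ≤ C₁)
    (hf₂ : ∀ y, ‖iteratedFDeriv ℝ 2 f y‖ ≤ M) :
    ‖∫ ω, f (Y ω + V ω) ∂μ - ∫ ω, f (Y ω) ∂μ‖ ≤ M / 2 * ∫ ω, ‖V ω‖ ^ 2 ∂μ := by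
  have hV₁ : Integrable V μ := hV.integrable one_le_two
  have hf_cont : Continuous f := hf.continuous
  have hDf_cont : Continuous (fderiv ℝ f) := hf.continuous_fderiv two_ne_zero
  have hfYV : Integrable (fun ω => f (Y ω + V ω)) μ :=
    .of_bound (hf_cont.comp_aestronglyMeasurable (hY.add hV₁.1)) C₀ (.of_forall fun _ => hf₀ _)
  have hfY : Integrable (fun ω => f (Y ω)) μ :=
    .of_bound (hf_cont.comp_aestronglyMeasurable hY) C₀ (.of_forall fun _ => hf₀ _)
  have hDfY : Integrable (fderiv ℝ f) (μ.map Y) :=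
    .of_bound hDf_cont.aestronglyMeasurable C₁ (.of_forall hf₁)
  have hlinear : ∫ ω, fderiv ℝ f (Y ω) (V ω) ∂μ = 0 := by
    have := hYV.integral_bilin_comp_comp (g := id) hY.aemeasurable hV₁.aemeasurable hDfY
      ((integrable_map_measure aestronglyMeasurable_id hV₁.aemeasurable).2 hV₁)
      (ContinuousLinearMap.id ℝ (E →L[ℝ] F))
    simpa [hV₀] using this
  have hDfYV : Integrable (fun ω => fderiv ℝ f (Y ω) (V ω)) μ := by
    refine .mono' (hV₁.norm.const_mul C₁) ?_ (.of_forall fun ω => ?_)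
    · exact Continuous.comp_aestronglyMeasurable₂ (g := fun y v => fderiv ℝ f y v) (by fun_prop)
        hY hV₁.1
    · exact ((fderiv ℝ f (Y ω)).le_opNorm _).trans
        (mul_le_mul_of_nonneg_right (hf₁ _) (norm_nonneg _))
  have hsplit : ∫ ω, f (Y ω + V ω) ∂μ - ∫ ω, f (Y ω) ∂μ =
      ∫ ω, f (Y ω + V ω) - f (Y ω) - fderiv ℝ f (Y ω) (V ω) ∂μ := by
    rw [integral_sub (by exact hfYV.sub hfY) hDfYV, integral_sub hfYV hfY, hlinear, sub_zero]
  rw [hsplit, ← integral_const_mul]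
  exact norm_integral_le_of_norm_le (hV.integrable_norm_pow two_ne_zero |>.const_mul _)
    (.of_forall fun ω => norm_sub_sub_fderiv_apply_le hf hf₂ _ _)

end

lemma Nat.floor_mul_add_one_div {a t : ℝ} (ha : 0 < a) (ht : 0 ≤ t) :
    ⌊a * (t + 1 / a)⌋₊ = ⌊a * t⌋₊ + 1 := by
  rw [mul_add, mul_one_div_cancel ha.ne', Nat.floor_add_one (by positivity)]

lemma MemCk.norm_iteratedFDeriv_le_ckNorm {d k i : ℕ} {f : Euc d → ℝ} (hf : MemCk k f)
    (hi : i ≤ k) (y : Euc d) : ‖iteratedFDeriv ℝ i f y‖ ≤ ckNorm k f := by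
  obtain ⟨C, hC⟩ := hf.2 i hi
  calc ‖iteratedFDeriv ℝ i f y‖ ≤ ⨆ x, ‖iteratedFDeriv ℝ i f x‖ :=
        le_ciSup ⟨C, by rintro _ ⟨x, rfl⟩; exact hC x⟩ y
    _ ≤ ckNorm k f :=
        Finset.single_le_sum (fun j _ => Real.iSup_nonneg fun _ => norm_nonneg _)
          (Finset.mem_range.2 (Nat.lt_succ_of_le hi))

lemma trace_covMatrix {d : ℕ} {Ω : Type} [MeasurableSpace Ω] {μ : Measure Ω} {Y : Ω → Euc d}
    (hY : MemLp Y 2 μ) : (covMatrix μ Y).trace = ∫ ω, ‖Y ω‖ ^ 2 ∂μ := by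
  have hY_sq : ∀ i, Integrable (fun ω => Y ω i ^ 2) μ := fun i =>
    ((EuclideanSpace.proj (𝕜 := ℝ) i).comp_memLp' hY).integrable_sq
  simp_rw [EuclideanSpace.real_norm_sq_eq, integral_finsetSum _ fun i _ => hY_sq i]
  simp [Matrix.trace, covMatrix, sq]

namespace IsIIDCentered

variable {d : ℕ} {Ω : Type} [MeasurableSpace Ω] {μ : Measure Ω} {X : ℕ → Ω → Euc d}
  {S : Matrix (Fin d) (Fin d) ℝ}

lemma identDistrib (hX : IsIIDCentered μ X S) (m : ℕ) : IdentDistrib (X m) (X 0) μ μ :=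
  ⟨(hX.meas m).aemeasurable, (hX.meas 0).aemeasurable, hX.ident m⟩

lemma measurable_pSum (hX : IsIIDCentered μ X S) (m : ℕ) : Measurable (pSum X m) :=
  Finset.measurable_sum _ fun i _ => hX.meas i

lemma memLp (hX : IsIIDCentered μ X S) (m : ℕ) : MemLp (X m) 2 μ :=
  (hX.identDistrib m).memLp_iff.2 hX.sqInt

lemma integral_eq_zero (hX : IsIIDCentered μ X S) (m : ℕ) : μ[X m] = 0 :=
  (hX.identDistrib m).integral_eq.trans hX.centered

lemma integral_norm_sq (hX : IsIIDCentered μ X S) (m : ℕ) :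
    ∫ ω, ‖X m ω‖ ^ 2 ∂μ = S.trace := by
  rw [← hX.covEq, trace_covMatrix hX.sqInt]
  exact ((hX.identDistrib m).comp (continuous_norm.pow 2).measurable).integral_eq

lemma indepFun_pSum (hX : IsIIDCentered μ X S) (m : ℕ) : pSum X m ⟂ᵢ[μ] X m := by
  convert hX.indep.indepFun_sum_range_succ hX.meas m
  ext ω : 1
  simp [pSum]

end IsIIDCentered

theorem scheme_time_increment_general
    {d : ℕ} {Ω : Type} [MeasurableSpace Ω] (μ : Measure Ω)
    [IsProbabilityMeasure μ] (X : ℕ → Ω → Euc d) (S : Matrix (Fin d) (Fin d) ℝ)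
    (hX : IsIIDCentered μ X S)
    (f : Euc d → ℝ) (hf : MemCk 2 f)
    (n : ℕ) (hn : 1 ≤ n) (x : Euc d) (t : ℝ) (ht : 0 ≤ t) :
    |schemeU μ X f n x (t + 1 / n) - schemeU μ X f n x t| ≤
      ckNorm 2 f * Matrix.trace S / (2 * n) := by
  have hn₀ : (0 : ℝ) < n := by exact_mod_cast hn
  set m := ⌊(n : ℝ) * t⌋₊
  set c := (Real.sqrt n)⁻¹
  have hstep : schemeU μ X f n x (t + 1 / n) =
      ∫ ω, f ((x + c • pSum X m ω) + c • X m ω) ∂μ := by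
    simp only [schemeU, Nat.floor_mul_add_one_div hn₀ ht, pSum, Finset.sum_range_succ,
      smul_add, add_assoc]
    rfl
  have hindep : (fun ω => x + c • pSum X m ω) ⟂ᵢ[μ] (fun ω => c • X m ω) :=
    (hX.indepFun_pSum m).comp (measurable_const_add x |>.comp (measurable_const_smul c))
      (measurable_const_smul c)
  have hcentered : μ[fun ω => c • X m ω] = 0 := by
    rw [integral_smul, hX.integral_eq_zero, smul_zero]
  obtain ⟨C₀, hC₀⟩ := hf.2 0 (by norm_num)
  obtain ⟨C₁, hC₁⟩ := hf.2 1 (by norm_num)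
  have hbound := norm_integral_comp_add_sub_integral_comp_le hindep
    ((hX.measurable_pSum m).const_smul c |>.const_add x).aestronglyMeasurable
    ((hX.memLp m).const_smul c) hcentered hf.1 (fun y => by simpa using hC₀ y)
    (fun y => by simpa using hC₁ y) (hf.norm_iteratedFDeriv_le_ckNorm le_rfl)
  rw [hstep, ← Real.norm_eq_abs]
  refine hbound.trans_eq ?_
  simp_rw [norm_smul, mul_pow, integral_const_mul, hX.integral_norm_sq, Real.norm_eq_abs, sq_abs,
    c, inv_pow, Real.sq_sqrt hn₀.le]
  field_simp

/-- **Time-increment bound for the scheme**: for every `f ∈ C²(ℝ^d)`, `n ≥ 1`, `x ∈ ℝ^d` and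
`t ≥ 0`, `|u_n(x, t + 1/n) − u_n(x,t)| ≤ ‖f‖_{C²} tr(Σ) / (2n)`. -/
theorem scheme_time_increment
    {d : ℕ} (hd : 1 ≤ d) {Ω : Type} [MeasurableSpace Ω] (μ : Measure Ω)
    [IsProbabilityMeasure μ] (X : ℕ → Ω → Euc d) (S : Matrix (Fin d) (Fin d) ℝ)
    (hX : IsIIDCentered μ X S)
    (f : Euc d → ℝ) (hf : MemCk 2 f)
    (n : ℕ) (hn : 1 ≤ n) (x : Euc d) (t : ℝ) (ht : 0 ≤ t) :
    |schemeU μ X f n x (t + 1 / n) - schemeU μ X f n x t| ≤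
      ckNorm 2 f * Matrix.trace S / (2 * n) :=
  scheme_time_increment_general μ X S hX f hf n hn x t ht
end
end
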